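/- For any 0 < E ≤ 1 and s ≥ 0: g(g⁻¹(s − ln E) + 1) + ln E ≥ ln(e^s + e·E), provided s ≥ ln E (which holds automatically since s ≥ 0 ≥ ln E). That is, the new additive-noise lower bound of Theorem 4 dominates the Entropy Power Inequality bound for the additive noise channel. -/

import Mathlib

/-! With `x = ginv (s - log E)` we have `exp (g x) = eˢ / E`, so the claim reads
`E · (exp (g x) + e) ≤ E · exp (g (x + 1))`. This follows from `(exp ∘ g)' ≥ e` on `(0, ∞)`:
the derivative `(log (x + 1) - log x) · exp (g x)` tends to `e` at infinity and is antitone,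
because its own derivative has the sign of `(log (x + 1) - log x)² - 1 / (x (x + 1))`, which is
`≤ 0` by the inequality between the logarithmic and the geometric mean. -/

open Real Set Filter

noncomputable def g (E : ℝ) : ℝ := (E + 1) * Real.log (E + 1) - E * Real.log E

noncomputable def ginv : ℝ → ℝ := Function.invFunOn g (Set.Ici 0)

open Topology

theorem sq_log_le_sq_sub_one_div {x : ℝ} (hx : 0 < x) : log x ^ 2 ≤ (x - 1) ^ 2 / x := by
  set u := log x / 2
  have hsq : exp u ^ 2 = x := by
    rw [← exp_nat_mul, Nat.cast_ofNat, mul_div_cancel₀ _ two_ne_zero, exp_log hx]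
  have hu : u ^ 2 ≤ sinh u ^ 2 := by
    rw [sq_le_sq, abs_sinh]; exact self_le_sinh_iff.mpr (abs_nonneg u)
  calc log x ^ 2 = 4 * u ^ 2 := by ring
    _ ≤ 4 * sinh u ^ 2 := by gcongr
    _ = (x - 1) ^ 2 / x := by rw [sinh_eq, exp_neg, ← hsq]; field_simp; ring

theorem sq_log_add_one_sub_log_le {x : ℝ} (hx : 0 < x) :
    (log (x + 1) - log x) ^ 2 ≤ (x * (x + 1))⁻¹ := by
  have h := sq_log_le_sq_sub_one_div (show 0 < (x + 1) / x by positivity)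
  rwa [log_div (by positivity) hx.ne', show ((x + 1) / x - 1) ^ 2 / ((x + 1) / x) =
    (x * (x + 1))⁻¹ by field_simp; ring] at h

theorem continuous_g : Continuous g :=
  (continuous_mul_log.comp (continuous_add_const 1)).sub continuous_mul_log

theorem g_eq_add_mul_log_sub (x : ℝ) : g x = log (x + 1) + x * (log (x + 1) - log x) := by
  rw [g]; ring

theorem hasDerivAt_g {x : ℝ} (hx : 0 < x) : HasDerivAt g (log (x + 1) - log x) x := by
  have h := ((hasDerivAt_mul_log (x := x + 1) (by positivity)).comp x
    ((hasDerivAt_id x).add_const 1)).sub (hasDerivAt_mul_log hx.ne')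
  exact h.congr_deriv (by ring)

noncomputable def derivExpG (x : ℝ) : ℝ := (log (x + 1) - log x) * exp (g x)

theorem hasDerivAt_exp_g {x : ℝ} (hx : 0 < x) :
    HasDerivAt (fun y => exp (g y)) (derivExpG x) x := by
  simpa only [derivExpG, mul_comm] using (hasDerivAt_g hx).exp

theorem hasDerivAt_derivExpG {x : ℝ} (hx : 0 < x) :
    HasDerivAt derivExpG (((log (x + 1) - log x) ^ 2 - (x * (x + 1))⁻¹) * exp (g x)) x := by
  have hL := (((hasDerivAt_id' x).add_const 1).log (by positivity)).sub (hasDerivAt_log hx.ne')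
  refine (hL.mul (hasDerivAt_exp_g hx)).congr_deriv ?_
  rw [Pi.sub_apply, derivExpG]
  field_simp
  ring

theorem antitoneOn_derivExpG : AntitoneOn derivExpG (Ioi 0) := by
  refine antitoneOn_of_hasDerivWithinAt_nonpos (convex_Ioi 0)
    (fun x hx => (hasDerivAt_derivExpG hx).continuousAt.continuousWithinAt)
    (fun x hx => (hasDerivAt_derivExpG (interior_subset hx)).hasDerivWithinAt) fun x hx => ?_
  rw [interior_Ioi] at hx
  exact mul_nonpos_of_nonpos_of_nonneg (by linarith [sq_log_add_one_sub_log_le hx]) (exp_pos _).le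

theorem tendsto_derivExpG_atTop : Tendsto derivExpG atTop (𝓝 (exp 1)) := by
  have hxL : Tendsto (fun x : ℝ => x * log (1 + 1 / x)) atTop (𝓝 1) :=
    tendsto_mul_log_one_add_div_atTop 1
  have hL : Tendsto (fun x : ℝ => log (1 + 1 / x)) atTop (𝓝 0) :=
    (hxL.div_atTop tendsto_id).congr' <| by
      filter_upwards [eventually_ne_atTop 0] with x hx
      exact mul_div_cancel_left₀ _ hx
  have hlim := (hxL.add hL).mul hxL.rexp
  rw [add_zero, one_mul] at hlim
  refine hlim.congr' ?_
  filter_upwards [eventually_gt_atTop 0] with x hx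
  have hlog : log (1 + 1 / x) = log (x + 1) - log x := by
    rw [← log_div (by positivity) hx.ne']; congr 1; field_simp
  rw [derivExpG, hlog, g_eq_add_mul_log_sub x, exp_add, exp_log (by positivity)]
  ring

theorem exp_one_le_derivExpG {x : ℝ} (hx : 0 < x) : exp 1 ≤ derivExpG x :=
  le_of_tendsto tendsto_derivExpG_atTop <| by
    filter_upwards [eventually_ge_atTop x] with y hy
    exact antitoneOn_derivExpG hx (hx.trans_le hy) hy

theorem monotoneOn_exp_g_sub : MonotoneOn (fun x => exp (g x) - exp 1 * x) (Ici 0) := by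
  refine monotoneOn_of_hasDerivWithinAt_nonneg (convex_Ici 0)
    (continuous_g.rexp.sub (continuous_const_mul _)).continuousOn
    (fun x hx => ((hasDerivAt_exp_g (by simpa using hx)).sub
      ((hasDerivAt_id x).const_mul (exp 1))).hasDerivWithinAt) fun x hx => ?_
  rw [interior_Ici] at hx
  linarith [exp_one_le_derivExpG hx]

theorem tendsto_g_atTop : Tendsto g atTop atTop := by
  refine tendsto_atTop_mono' _ ?_
    (tendsto_log_atTop.comp (tendsto_atTop_add_const_right _ 1 tendsto_id))
  filter_upwards [eventually_gt_atTop 0] with x hx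
  have hlog : log x ≤ log (x + 1) := log_le_log hx (by linarith)
  rw [g_eq_add_mul_log_sub]
  exact le_add_of_nonneg_right (mul_nonneg hx.le (sub_nonneg.2 hlog))

theorem exists_g_eq {t : ℝ} (ht : 0 ≤ t) : ∃ x ∈ Ici 0, g x = t :=
  intermediate_value_Ici continuous_g.continuousOn tendsto_g_atTop (by simpa [g] using ht)

theorem ginv_nonneg {t : ℝ} (ht : 0 ≤ t) : 0 ≤ ginv t :=
  Function.invFunOn_mem (exists_g_eq ht)

theorem g_ginv {t : ℝ} (ht : 0 ≤ t) : g (ginv t) = t :=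
  Function.invFunOn_eq (exists_g_eq ht)

theorem additive_noise_bound_dominates_EPI (E s : ℝ) (hE0 : 0 < E) (hE1 : E ≤ 1)
    (hs : 0 ≤ s) :
    Real.log (Real.exp s + Real.exp 1 * E) ≤
      g (ginv (s - Real.log E) + 1) + Real.log E := by
  have ht : 0 ≤ s - log E := by linarith [log_nonpos hE0.le hE1]
  set x := ginv (s - log E)
  have hx : 0 ≤ x := ginv_nonneg ht
  have hgx : exp (g x) * E = exp s := by
    rw [g_ginv ht, exp_sub, exp_log hE0, div_mul_cancel₀ _ hE0.ne']
  have hstep : exp (g x) + exp 1 ≤ exp (g (x + 1)) := by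
    have := monotoneOn_exp_g_sub hx (show (0 : ℝ) ≤ x + 1 by linarith) (by linarith)
    simp only at this
    linarith
  rw [log_le_iff_le_exp (by positivity), exp_add, exp_log hE0, ← hgx]
  calc exp (g x) * E + exp 1 * E = (exp (g x) + exp 1) * E := by ring
    _ ≤ exp (g (x + 1)) * E := by gcongr
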